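/- arXiv:2405.20769 — 2 statements merged into one kernel-verified Lean document; each statement's English description precedes it below -/
import Mathlib

section
/- Dominating pair of datasets for the Poisson-subsampled Gaussian mechanism under the remove relation: let σ > 0 and γ ∈ [0,1]. For every pair of finite tuples D, D' with all entries in [−1,1] such that D' is obtained from D by deleting one entry, and every α ≥ 0, H_α(Mγ(D) ‖ Mγ(D')) ≤ H_α((1−γ)·N(0,σ²) + γ·N(1,σ²) ‖ N(0,σ²)). Moreover this bound is realized by D = (0,…,0,1) and D' = (0,…,0). -/
open MeasureTheory ProbabilityTheory

/-- Hockey-stick divergence: `H_α(P ‖ Q) = sup_{E measurable} (P(E) − α·Q(E))`. -/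
noncomputable def hsDiv {X : Type*} [MeasurableSpace X] (α : ℝ) (P Q : Measure X) : ℝ :=
  ⨆ E : {E : Set X // MeasurableSet E}, ((P E).toReal - α * (Q E).toReal)

/-- The Poisson-subsampled Gaussian mechanism:
`Mγ(x) = ∑_{S ⊆ [m]} γ^{|S|} (1−γ)^{m−|S|} · N(∑_{i∈S} x_i, σ²)`. -/
noncomputable def poissonGauss (σ γ : ℝ) {m : ℕ} (x : Fin m → ℝ) : Measure ℝ :=
  ∑ S : Finset (Fin m),
    ENNReal.ofReal (γ ^ S.card * (1 - γ) ^ (m - S.card)) •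
      gaussianReal (∑ i ∈ S, x i) ⟨σ ^ 2, sq_nonneg σ⟩

/-!
Sorting the subsets of the indices of `D` by whether they contain the removed index `i`, `Mγ(D)`
and `Mγ(D')` become the same convex combination, over `S ⊆ [m]` with `μ_S = ∑_{j ∈ S} D'_j`, of
the measures `(1 - γ) N(μ_S, σ²) + γ N(μ_S + D_i, σ²)` and `N(μ_S, σ²)` respectively. As `H_α` is
jointly quasi-convex and translation invariant, it suffices to compare the pair with shift
`x = D_i ∈ [-1, 1]` to the pair with shift `1`. The former is the image of the latter under the
Markov kernel `y ↦ N(x y, (1 - x²) σ²)`, and `H_α` cannot increase under such a post-processing: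
by the layer-cake formula, `∫ g dP - α ∫ g dQ ≤ H_α(P ‖ Q)` whenever `0 ≤ g ≤ 1`.
-/

open Set
open scoped NNReal ENNReal

section HockeyStick

variable {X : Type*} [MeasurableSpace X] {α : ℝ}

section
variable {P Q : Measure X}

lemma hsDiv_bddAbove [IsFiniteMeasure P] (hα : 0 ≤ α) :
    BddAbove (range fun E : {E : Set X // MeasurableSet E} => (P E).toReal - α * (Q E).toReal) := by
  refine ⟨(P univ).toReal, ?_⟩
  rintro _ ⟨E, rfl⟩
  have hPE : (P E).toReal ≤ (P univ).toReal :=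
    ENNReal.toReal_mono (measure_ne_top _ _) (measure_mono (subset_univ _))
  have hQE : 0 ≤ α * (Q E).toReal := by positivity
  dsimp only
  linarith

lemma le_hsDiv [IsFiniteMeasure P] (hα : 0 ≤ α) {E : Set X} (hE : MeasurableSet E) :
    (P E).toReal - α * (Q E).toReal ≤ hsDiv α P Q :=
  le_ciSup (hsDiv_bddAbove hα) ⟨E, hE⟩

lemma hsDiv_le {B : ℝ} (h : ∀ E, MeasurableSet E → (P E).toReal - α * (Q E).toReal ≤ B) :
    hsDiv α P Q ≤ B :=
  ciSup_le fun E => h E.1 E.2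

lemma hsDiv_nonneg [IsFiniteMeasure P] (hα : 0 ≤ α) : 0 ≤ hsDiv α P Q := by
  simpa using le_hsDiv (P := P) (Q := Q) hα MeasurableSet.empty

lemma hsDiv_map_le [IsFiniteMeasure P] (hα : 0 ≤ α) {Y : Type*} [MeasurableSpace Y] {f : X → Y}
    (hf : Measurable f) : hsDiv α (P.map f) (Q.map f) ≤ hsDiv α P Q :=
  hsDiv_le fun E hE => by
    rw [Measure.map_apply hf hE, Measure.map_apply hf hE]
    exact le_hsDiv hα (hf hE)

lemma lintegral_le_ofReal_hsDiv_add [IsFiniteMeasure P] [IsFiniteMeasure Q] (hα : 0 ≤ α)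
    {g : X → ℝ≥0∞} (hg : Measurable g) (hg1 : ∀ x, g x ≤ 1) :
    ∫⁻ x, g x ∂P ≤ ENNReal.ofReal (hsDiv α P Q) + ENNReal.ofReal α * ∫⁻ x, g x ∂Q := by
  set H := hsDiv α P Q
  set f : X → ℝ := fun x => (g x).toReal
  have hf : Measurable f := hg.ennreal_toReal
  have layer_cake (μ : Measure X) : ∫⁻ x, g x ∂μ = ∫⁻ t in Ioi 0, μ {x | t < f x} := by
    rw [← lintegral_eq_lintegral_meas_lt μ (ae_of_all _ fun _ => ENNReal.toReal_nonneg)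
      hf.aemeasurable]
    exact lintegral_congr fun x =>
      (ENNReal.ofReal_toReal ((hg1 x).trans_lt ENNReal.one_lt_top).ne).symm
  have level_le (t : ℝ) : P {x | t < f x} ≤
      (Iic 1).indicator (fun _ => ENNReal.ofReal H) t + ENNReal.ofReal α * Q {x | t < f x} := by
    by_cases ht : t ≤ 1
    · have hE := le_hsDiv (P := P) (Q := Q) hα (measurableSet_lt (measurable_const (a := t)) hf)
      rw [indicator_of_mem (mem_Iic.2 ht), ← ENNReal.ofReal_toReal (measure_ne_top P _),
        ← ENNReal.ofReal_toReal (measure_ne_top Q _), ← ENNReal.ofReal_mul hα,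
        ← ENNReal.ofReal_add (hsDiv_nonneg hα) (by positivity)]
      exact ENNReal.ofReal_le_ofReal (by linarith)
    · have hempty : {x | t < f x} = ∅ :=
        eq_empty_of_forall_notMem fun x hx => ht (hx.out.le.trans (by
          simpa using ENNReal.toReal_mono ENNReal.one_ne_top (hg1 x)))
      simp [hempty]
  rw [layer_cake P, layer_cake Q]
  calc _ ≤ ∫⁻ t in Ioi 0, ((Iic 1).indicator (fun _ => ENNReal.ofReal H) t
          + ENNReal.ofReal α * Q {x | t < f x}) := lintegral_mono level_le
    _ = _ := by
      rw [lintegral_add_left (measurable_const.indicator measurableSet_Iic),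
        lintegral_indicator_const measurableSet_Iic, Measure.restrict_apply measurableSet_Iic,
        Iic_inter_Ioi, Real.volume_Ioc, sub_zero, ENNReal.ofReal_one, mul_one,
        lintegral_const_mul' _ _ ENNReal.ofReal_ne_top]

theorem toReal_lintegral_sub_le_hsDiv [IsFiniteMeasure P] [IsFiniteMeasure Q] (hα : 0 ≤ α)
    {g : X → ℝ≥0∞} (hg : Measurable g) (hg1 : ∀ x, g x ≤ 1) :
    (∫⁻ x, g x ∂P).toReal - α * (∫⁻ x, g x ∂Q).toReal ≤ hsDiv α P Q := by
  have hQg : ∫⁻ x, g x ∂Q ≠ ∞ := ((lintegral_mono hg1).trans_lt (by simp)).ne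
  have h := ENNReal.toReal_mono (by finiteness) (lintegral_le_ofReal_hsDiv_add hα hg hg1)
  rw [ENNReal.toReal_add (by finiteness) (by finiteness), ENNReal.toReal_mul,
    ENNReal.toReal_ofReal (hsDiv_nonneg hα), ENNReal.toReal_ofReal hα] at h
  linarith

end

lemma MeasureTheory.Measure.conv_apply_eq_lintegral [AddMonoid X] [MeasurableAdd₂ X]
    (μ ν : Measure X) [SFinite ν] {E : Set X} (hE : MeasurableSet E) :
    (μ ∗ ν) E = ∫⁻ x, ν ((x + ·) ⁻¹' E) ∂μ := by
  rw [Measure.conv, Measure.map_apply measurable_add hE,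
    Measure.prod_apply (hE.preimage measurable_add)]
  rfl

lemma hsDiv_conv_le [AddMonoid X] [MeasurableAdd₂ X] (hα : 0 ≤ α) (P Q ν : Measure X)
    [IsFiniteMeasure P] [IsFiniteMeasure Q] [IsProbabilityMeasure ν] :
    hsDiv α (P ∗ ν) (Q ∗ ν) ≤ hsDiv α P Q :=
  hsDiv_le fun E hE => by
    rw [Measure.conv_apply_eq_lintegral P ν hE, Measure.conv_apply_eq_lintegral Q ν hE]
    exact toReal_lintegral_sub_le_hsDiv hα
      (measurable_measure_prodMk_left (hE.preimage measurable_add)) fun _ => prob_le_one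

lemma hsDiv_sum_smul_le {ι : Type*} {s : Finset ι} {w : ι → ℝ} (hw : ∀ i ∈ s, 0 ≤ w i)
    (hw1 : ∑ i ∈ s, w i = 1) {P Q : ι → Measure X} [∀ i, IsFiniteMeasure (P i)]
    [∀ i, IsFiniteMeasure (Q i)] (hα : 0 ≤ α) {B : ℝ} (hB : ∀ i ∈ s, hsDiv α (P i) (Q i) ≤ B) :
    hsDiv α (∑ i ∈ s, ENNReal.ofReal (w i) • P i) (∑ i ∈ s, ENNReal.ofReal (w i) • Q i) ≤ B := by
  have toReal_apply (μ : ι → Measure X) [∀ i, IsFiniteMeasure (μ i)] (E : Set X) :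
      ((∑ i ∈ s, ENNReal.ofReal (w i) • μ i) E).toReal = ∑ i ∈ s, w i * (μ i E).toReal := by
    simp only [Measure.finsetSum_apply, Measure.smul_apply, smul_eq_mul]
    rw [ENNReal.toReal_sum fun i _ => ENNReal.mul_ne_top ENNReal.ofReal_ne_top (measure_ne_top _ _)]
    refine Finset.sum_congr rfl fun i hi => ?_
    rw [ENNReal.toReal_mul, ENNReal.toReal_ofReal (hw i hi)]
  refine hsDiv_le fun E hE => ?_
  rw [toReal_apply P, toReal_apply Q, Finset.mul_sum, ← Finset.sum_sub_distrib]
  calc ∑ i ∈ s, (w i * (P i E).toReal - α * (w i * (Q i E).toReal))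
      = ∑ i ∈ s, w i * ((P i E).toReal - α * (Q i E).toReal) :=
        Finset.sum_congr rfl fun i _ => by ring
    _ ≤ ∑ i ∈ s, w i * B := Finset.sum_le_sum fun i hi =>
        mul_le_mul_of_nonneg_left ((le_hsDiv hα hE).trans (hB i hi)) (hw i hi)
    _ = B := by rw [← Finset.sum_mul, hw1, one_mul]

end HockeyStick

section GaussMix

noncomputable def gaussMix (γ a b : ℝ) (v : ℝ≥0) : Measure ℝ :=
  ENNReal.ofReal (1 - γ) • gaussianReal a v + ENNReal.ofReal γ • gaussianReal b v

instance (γ a b : ℝ) (v : ℝ≥0) : IsFiniteMeasure (gaussMix γ a b v) :=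
  ⟨by simp [gaussMix]⟩

variable {γ α : ℝ}

lemma gaussMix_map_add_const (a b : ℝ) (v : ℝ≥0) (y : ℝ) :
    (gaussMix γ a b v).map (· + y) = gaussMix γ (a + y) (b + y) v := by
  rw [gaussMix, Measure.map_add _ _ (measurable_add_const y), Measure.map_smul, Measure.map_smul,
    gaussianReal_map_add_const, gaussianReal_map_add_const, gaussMix]

lemma gaussMix_map_const_mul (a b : ℝ) (v : ℝ≥0) (c : ℝ) :
    (gaussMix γ a b v).map (c * ·) =
      gaussMix γ (c * a) (c * b) (.mk (c ^ 2) (sq_nonneg c) * v) := by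
  rw [gaussMix, Measure.map_add _ _ (measurable_const_mul c), Measure.map_smul, Measure.map_smul,
    gaussianReal_map_const_mul, gaussianReal_map_const_mul, gaussMix]

lemma gaussMix_conv_gaussianReal (a b : ℝ) (v w : ℝ≥0) :
    gaussMix γ a b v ∗ gaussianReal 0 w = gaussMix γ a b (v + w) := by
  rw [gaussMix, Measure.add_conv, Measure.conv_smul_left, Measure.conv_smul_left,
    gaussianReal_conv_gaussianReal, gaussianReal_conv_gaussianReal, add_zero, add_zero, gaussMix]

theorem hsDiv_gaussMix_le (hα : 0 ≤ α) {x : ℝ} (hx : |x| ≤ 1) (v : ℝ≥0) :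
    hsDiv α (gaussMix γ 0 x v) (gaussianReal 0 v) ≤
      hsDiv α (gaussMix γ 0 1 v) (gaussianReal 0 v) := by
  -- `N(x c, v)` is the law of `x Y + Z` for `Y ∼ N(c, v)` and an independent `Z ∼ N(0, (1 - x²) v)`
  set w : ℝ≥0 := .mk (1 - x ^ 2) (sub_nonneg.2 ((sq_le_one_iff_abs_le_one x).2 hx)) * v
  have hvar : .mk (x ^ 2) (sq_nonneg x) * v + w = v := by
    ext
    simp [w]
    ring
  have hmix : (gaussMix γ 0 1 v).map (x * ·) ∗ gaussianReal 0 w = gaussMix γ 0 x v := by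
    rw [gaussMix_map_const_mul, gaussMix_conv_gaussianReal, mul_zero, mul_one, hvar]
  have hnoise : (gaussianReal 0 v).map (x * ·) ∗ gaussianReal 0 w = gaussianReal 0 v := by
    rw [gaussianReal_map_const_mul, gaussianReal_conv_gaussianReal, mul_zero, add_zero, hvar]
  calc hsDiv α (gaussMix γ 0 x v) (gaussianReal 0 v)
      = hsDiv α ((gaussMix γ 0 1 v).map (x * ·) ∗ gaussianReal 0 w)
          ((gaussianReal 0 v).map (x * ·) ∗ gaussianReal 0 w) := by rw [hmix, hnoise]
    _ ≤ hsDiv α ((gaussMix γ 0 1 v).map (x * ·)) ((gaussianReal 0 v).map (x * ·)) :=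
        hsDiv_conv_le hα _ _ _
    _ ≤ hsDiv α (gaussMix γ 0 1 v) (gaussianReal 0 v) := hsDiv_map_le hα (measurable_const_mul x)

lemma hsDiv_gaussMix_add_le (hα : 0 ≤ α) (a x : ℝ) (v : ℝ≥0) :
    hsDiv α (gaussMix γ a (x + a) v) (gaussianReal a v) ≤
      hsDiv α (gaussMix γ 0 x v) (gaussianReal 0 v) := by
  have h := hsDiv_map_le (P := gaussMix γ 0 x v) (Q := gaussianReal 0 v) hα
    (measurable_add_const a)
  rwa [gaussMix_map_add_const, gaussianReal_map_add_const, zero_add] at h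

end GaussMix

theorem Fin.sum_finset_succAbove {M : Type*} [AddCommMonoid M] {m : ℕ} (i : Fin (m + 1))
    (F : Finset (Fin (m + 1)) → M) :
    ∑ T, F T = ∑ S : Finset (Fin m),
      (F (S.map i.succAboveEmb) + F (insert i (S.map i.succAboveEmb))) := by
  rw [← Finset.powerset_univ, Fin.univ_succAbove m i, Finset.cons_eq_insert,
    Finset.sum_powerset_insert (by simp), ← Finset.sum_add_distrib, Finset.map_eq_image,
    Finset.powerset_image, Finset.sum_image, Finset.powerset_univ]
  · simp only [Finset.map_eq_image]
  · exact (Finset.image_injective (Fin.succAboveEmb i).injective).injOn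

section PoissonGauss

variable {σ γ : ℝ}

lemma sum_ofReal_pow_mul_one_sub_pow (hγ0 : 0 ≤ γ) (hγ1 : γ ≤ 1) (m : ℕ) :
    ∑ S : Finset (Fin m), ENNReal.ofReal (γ ^ S.card * (1 - γ) ^ (m - S.card)) = 1 := by
  have h1γ : 0 ≤ 1 - γ := sub_nonneg.2 hγ1
  rw [← ENNReal.ofReal_sum_of_nonneg fun S _ => by positivity, Fin.sum_pow_mul_eq_add_pow]
  simp

theorem poissonGauss_eq_sum_gaussMix (hγ0 : 0 ≤ γ) (hγ1 : γ ≤ 1) {m : ℕ} (D : Fin (m + 1) → ℝ)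
    (i : Fin (m + 1)) :
    poissonGauss σ γ D = ∑ S : Finset (Fin m),
      ENNReal.ofReal (γ ^ S.card * (1 - γ) ^ (m - S.card)) •
        gaussMix γ (∑ j ∈ S, D (i.succAbove j)) (D i + ∑ j ∈ S, D (i.succAbove j))
          ⟨σ ^ 2, sq_nonneg σ⟩ := by
  rw [poissonGauss, Fin.sum_finset_succAbove i]
  refine Finset.sum_congr rfl fun S _ => ?_
  set c := γ ^ S.card * (1 - γ) ^ (m - S.card)
  have hc : 0 ≤ c := by have := sub_nonneg.2 hγ1; positivity
  have hi : i ∉ S.map i.succAboveEmb := by simp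
  have hS : S.card ≤ m := by simpa using S.card_le_univ
  have hout : γ ^ S.card * (1 - γ) ^ (m + 1 - S.card) = c * (1 - γ) := by
    rw [Nat.sub_add_comm hS, pow_succ, mul_assoc]
  have hin : γ ^ (S.card + 1) * (1 - γ) ^ (m + 1 - (S.card + 1)) = c * γ := by
    rw [Nat.add_sub_add_right, pow_succ]
    ring
  rw [Finset.card_map, Finset.sum_map, Finset.card_insert_of_notMem hi, Finset.card_map,
    Finset.sum_insert hi, Finset.sum_map, hout, hin, ENNReal.ofReal_mul hc, ENNReal.ofReal_mul hc]
  simp only [gaussMix, smul_add, smul_smul, Fin.coe_succAboveEmb]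

lemma poissonGauss_const_zero (hγ0 : 0 ≤ γ) (hγ1 : γ ≤ 1) (m : ℕ) :
    poissonGauss σ γ (fun _ : Fin m => (0 : ℝ)) = gaussianReal 0 ⟨σ ^ 2, sq_nonneg σ⟩ := by
  simp only [poissonGauss, Finset.sum_const_zero]
  rw [← Finset.sum_smul, sum_ofReal_pow_mul_one_sub_pow hγ0 hγ1, one_smul]

lemma poissonGauss_snoc_one (hγ0 : 0 ≤ γ) (hγ1 : γ ≤ 1) (m : ℕ) :
    poissonGauss σ γ (Fin.snoc (fun _ : Fin m => (0 : ℝ)) 1) =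
      gaussMix γ 0 1 ⟨σ ^ 2, sq_nonneg σ⟩ := by
  simp only [poissonGauss_eq_sum_gaussMix hγ0 hγ1 _ (Fin.last m), Fin.succAbove_last,
    Fin.snoc_castSucc, Fin.snoc_last, Finset.sum_const_zero, add_zero]
  rw [← Finset.sum_smul, sum_ofReal_pow_mul_one_sub_pow hγ0 hγ1, one_smul]

theorem hsDiv_poissonGauss_remove_le (hγ0 : 0 ≤ γ) (hγ1 : γ ≤ 1) {m : ℕ} {D : Fin (m + 1) → ℝ}
    {D' : Fin m → ℝ} (hD : ∀ j, D j ∈ Icc (-1 : ℝ) 1) {i : Fin (m + 1)}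
    (hD' : ∀ j, D' j = D (i.succAbove j)) {α : ℝ} (hα : 0 ≤ α) :
    hsDiv α (poissonGauss σ γ D) (poissonGauss σ γ D') ≤
      hsDiv α (gaussMix γ 0 1 ⟨σ ^ 2, sq_nonneg σ⟩) (gaussianReal 0 ⟨σ ^ 2, sq_nonneg σ⟩) := by
  have h1γ : 0 ≤ 1 - γ := sub_nonneg.2 hγ1
  rw [poissonGauss_eq_sum_gaussMix hγ0 hγ1 D i, poissonGauss]
  simp only [hD']
  -- `⟨σ ^ 2, _⟩` is a `Subtype.mk`, which instance search does not reducibly see as an `ℝ≥0`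
  set v : ℝ≥0 := ⟨σ ^ 2, sq_nonneg σ⟩
  refine hsDiv_sum_smul_le (fun S _ => by positivity) (by simp [Fin.sum_pow_mul_eq_add_pow]) hα
    fun S _ => ?_
  exact (hsDiv_gaussMix_add_le hα _ _ _).trans (hsDiv_gaussMix_le hα (abs_le.2 (hD i)) _)

end PoissonGauss

theorem poissonGauss_dominating_pair_remove_general (σ γ : ℝ) (hγ0 : 0 ≤ γ) (hγ1 : γ ≤ 1) :
    (∀ (m : ℕ) (D : Fin (m + 1) → ℝ) (D' : Fin m → ℝ),
      (∀ j, D j ∈ Set.Icc (-1 : ℝ) 1) → (∀ j, D' j ∈ Set.Icc (-1 : ℝ) 1) →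
      (∃ i : Fin (m + 1), ∀ j : Fin m, D' j = D (i.succAbove j)) →
      ∀ α : ℝ, 0 ≤ α →
        hsDiv α (poissonGauss σ γ D) (poissonGauss σ γ D') ≤
          hsDiv α
            (ENNReal.ofReal (1 - γ) • gaussianReal 0 ⟨σ ^ 2, sq_nonneg σ⟩ +
              ENNReal.ofReal γ • gaussianReal 1 ⟨σ ^ 2, sq_nonneg σ⟩)
            (gaussianReal 0 ⟨σ ^ 2, sq_nonneg σ⟩)) ∧
    (∀ m : ℕ,
      poissonGauss σ γ (Fin.snoc (fun _ : Fin m => (0 : ℝ)) 1) =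
        ENNReal.ofReal (1 - γ) • gaussianReal 0 ⟨σ ^ 2, sq_nonneg σ⟩ +
          ENNReal.ofReal γ • gaussianReal 1 ⟨σ ^ 2, sq_nonneg σ⟩ ∧
      poissonGauss σ γ (fun _ : Fin m => (0 : ℝ)) = gaussianReal 0 ⟨σ ^ 2, sq_nonneg σ⟩) :=
  ⟨fun _ _ _ hD _ ⟨_, hD'⟩ _ hα => hsDiv_poissonGauss_remove_le hγ0 hγ1 hD hD' hα,
    fun m => ⟨poissonGauss_snoc_one hγ0 hγ1 m, poissonGauss_const_zero hγ0 hγ1 m⟩⟩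

/-- Dominating pair of datasets for the Poisson-subsampled Gaussian mechanism under the
remove relation: for datasets with entries in `[−1,1]` where `D'` is `D` with one entry
removed, `H_α(Mγ(D) ‖ Mγ(D')) ≤ H_α((1−γ)N(0,σ²) + γN(1,σ²) ‖ N(0,σ²))` for all `α ≥ 0`,
and the bound is realized by `D = (0,…,0,1)`, `D' = (0,…,0)`. -/
theorem poissonGauss_dominating_pair_remove (σ γ : ℝ) (hσ : 0 < σ) (hγ0 : 0 ≤ γ) (hγ1 : γ ≤ 1) :
    (∀ (m : ℕ) (D : Fin (m + 1) → ℝ) (D' : Fin m → ℝ),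
      (∀ j, D j ∈ Set.Icc (-1 : ℝ) 1) → (∀ j, D' j ∈ Set.Icc (-1 : ℝ) 1) →
      (∃ i : Fin (m + 1), ∀ j : Fin m, D' j = D (i.succAbove j)) →
      ∀ α : ℝ, 0 ≤ α →
        hsDiv α (poissonGauss σ γ D) (poissonGauss σ γ D') ≤
          hsDiv α
            (ENNReal.ofReal (1 - γ) • gaussianReal 0 ⟨σ ^ 2, sq_nonneg σ⟩ +
              ENNReal.ofReal γ • gaussianReal 1 ⟨σ ^ 2, sq_nonneg σ⟩)
            (gaussianReal 0 ⟨σ ^ 2, sq_nonneg σ⟩)) ∧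
    (∀ m : ℕ,
      poissonGauss σ γ (Fin.snoc (fun _ : Fin m => (0 : ℝ)) 1) =
        ENNReal.ofReal (1 - γ) • gaussianReal 0 ⟨σ ^ 2, sq_nonneg σ⟩ +
          ENNReal.ofReal γ • gaussianReal 1 ⟨σ ^ 2, sq_nonneg σ⟩ ∧
      poissonGauss σ γ (fun _ : Fin m => (0 : ℝ)) = gaussianReal 0 ⟨σ ^ 2, sq_nonneg σ⟩) :=
  poissonGauss_dominating_pair_remove_general σ γ hγ0 hγ1
end

section
/- Privacy-loss-distribution representation of the hockey-stick divergence: let P and Q be mutually absolutely continuous probability measures on a measurable space, and let L be the law of the random variable Y := ln(dP/dQ)(X) for X ∼ P, where dP/dQ is the Radon–Nikodym derivative. Then for every ε ∈ ℝ, H_{e^ε}(P ‖ Q) = E_{Y ∼ L}[max(0, 1 − e^{ε − Y})]. -/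
open MeasureTheory ProbabilityTheory
open scoped ENNReal NNReal

/-!
Write `g = dP/dQ`. Then `P(E) − α Q(E) = ∫_E (g − α) dQ`, which is largest for
`E = {α < g}`, so `H_α(P ‖ Q) = ∫ (g − α)⁺ dQ`. On the other side, the change of measure
`dP = g dQ` turns `E_L[(1 − e^{ε−Y})⁺]` into `∫ g (1 − e^ε / g)⁺ dQ = ∫ (g − e^ε)⁺ dQ`.
-/

section PositivePart

variable {α : Type*} [MeasurableSpace α] {μ : Measure α} {f : α → ℝ}

lemma setIntegral_le_integral_max_zero (hf : Integrable f μ) {s : Set α} (hs : MeasurableSet s) :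
    ∫ x in s, f x ∂μ ≤ ∫ x, max 0 (f x) ∂μ := by
  have hf_pos : Integrable (fun x => max 0 (f x)) μ := by
    simpa only [max_comm] using hf.pos_part
  calc ∫ x in s, f x ∂μ ≤ ∫ x in s, max 0 (f x) ∂μ :=
        setIntegral_mono_on hf.integrableOn hf_pos.integrableOn hs fun x _ => le_max_right _ _
    _ ≤ ∫ x, max 0 (f x) ∂μ :=
        setIntegral_le_integral hf_pos (Filter.Eventually.of_forall fun x => le_max_left _ _)

lemma setIntegral_pos_eq_integral_max_zero (hf : Measurable f) :
    ∫ x in {x | 0 < f x}, f x ∂μ = ∫ x, max 0 (f x) ∂μ := by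
  rw [← integral_indicator (measurableSet_lt measurable_const hf)]
  congr 1 with x
  by_cases hx : 0 < f x
  · rw [Set.indicator_of_mem (s := {x | 0 < f x}) hx, max_eq_right hx.le]
  · rw [Set.indicator_of_notMem (s := {x | 0 < f x}) hx, max_eq_left (not_lt.mp hx)]

end PositivePart

section RadonNikodym

variable {X : Type*} [MeasurableSpace X] {P Q : Measure X}

lemma toReal_sub_mul_toReal_eq_setIntegral_rnDeriv [IsFiniteMeasure P] [IsFiniteMeasure Q]
    (hPQ : P ≪ Q) (α : ℝ) (s : Set X) :
    (P s).toReal - α * (Q s).toReal = ∫ x in s, ((P.rnDeriv Q x).toReal - α) ∂Q := by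
  rw [integral_sub Measure.integrable_toReal_rnDeriv.integrableOn (integrable_const α).integrableOn,
    Measure.setIntegral_toReal_rnDeriv hPQ s, setIntegral_const, smul_eq_mul, mul_comm,
    measureReal_def, measureReal_def]

theorem hsDiv_eq_integral_max_zero_rnDeriv_sub [IsFiniteMeasure P] [IsFiniteMeasure Q]
    (hPQ : P ≪ Q) (α : ℝ) :
    hsDiv α P Q = ∫ x, max 0 ((P.rnDeriv Q x).toReal - α) ∂Q := by
  have hg : Measurable fun x => (P.rnDeriv Q x).toReal - α :=
    (Measure.measurable_rnDeriv P Q).ennreal_toReal.sub_const α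
  have : Nonempty {E : Set X // MeasurableSet E} := ⟨⟨∅, MeasurableSet.empty⟩⟩
  refine ciSup_eq_of_forall_le_of_forall_lt_exists_gt (fun E => ?_) (fun w hw => ?_)
  · rw [toReal_sub_mul_toReal_eq_setIntegral_rnDeriv hPQ]
    exact setIntegral_le_integral_max_zero
      (Measure.integrable_toReal_rnDeriv.sub (integrable_const α)) E.2
  · refine ⟨⟨{x | 0 < (P.rnDeriv Q x).toReal - α}, measurableSet_lt measurable_const hg⟩, ?_⟩
    rwa [toReal_sub_mul_toReal_eq_setIntegral_rnDeriv hPQ,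
      setIntegral_pos_eq_integral_max_zero hg]

theorem integral_map_log_toReal_rnDeriv [SigmaFinite P] [P.HaveLebesgueDecomposition Q]
    (hPQ : P ≪ Q) {f : ℝ → ℝ} (hf : Measurable f) :
    ∫ y, f y ∂(P.map fun x => Real.log (P.rnDeriv Q x).toReal) =
      ∫ x, (P.rnDeriv Q x).toReal * f (Real.log (P.rnDeriv Q x).toReal) ∂Q := by
  have hlog : Measurable fun x => Real.log (P.rnDeriv Q x).toReal :=
    Real.measurable_log.comp (Measure.measurable_rnDeriv P Q).ennreal_toReal
  rw [integral_map hlog.aemeasurable hf.aestronglyMeasurable]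
  exact (integral_rnDeriv_smul hPQ).symm

end RadonNikodym

-- At `t = 0` the junk value `Real.log 0 = 0` is harmless, as the factor `t` kills it.
lemma mul_max_zero_one_sub_exp_sub_log (ε : ℝ) {t : ℝ} (ht : 0 ≤ t) :
    t * max 0 (1 - Real.exp (ε - Real.log t)) = max 0 (t - Real.exp ε) := by
  rcases ht.eq_or_lt with rfl | ht
  · rw [zero_mul, zero_sub, max_eq_left (neg_nonpos.mpr (Real.exp_pos ε).le)]
  · rw [Real.exp_sub, Real.exp_log ht, mul_max_of_nonneg _ _ ht.le, mul_zero, mul_sub, mul_one,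
      mul_div_cancel₀ _ ht.ne']

theorem hsDiv_eq_expectation_pld_general {X : Type*} [MeasurableSpace X]
    (P Q : Measure X) [IsProbabilityMeasure P] [IsProbabilityMeasure Q]
    (hPQ : P ≪ Q) (ε : ℝ) :
    hsDiv (Real.exp ε) P Q =
      ∫ y, max 0 (1 - Real.exp (ε - y))
        ∂(P.map fun x => Real.log ((P.rnDeriv Q x).toReal)) := by
  have hf : Measurable fun y : ℝ => max 0 (1 - Real.exp (ε - y)) := by fun_prop
  rw [hsDiv_eq_integral_max_zero_rnDeriv_sub hPQ, integral_map_log_toReal_rnDeriv hPQ hf]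
  congr 1 with x
  exact (mul_max_zero_one_sub_exp_sub_log ε ENNReal.toReal_nonneg).symm

/-- Privacy-loss-distribution representation of the hockey-stick divergence: for mutually
absolutely continuous probability measures `P ≪ Q ≪ P`, letting `L` be the law of
`Y = ln(dP/dQ)(X)` for `X ∼ P` (the privacy loss distribution), we have for every `ε ∈ ℝ`
that `H_{e^ε}(P ‖ Q) = E_{Y ∼ L}[max(0, 1 − e^{ε − Y})]`. -/
theorem hsDiv_eq_expectation_pld {X : Type*} [MeasurableSpace X]
    (P Q : Measure X) [IsProbabilityMeasure P] [IsProbabilityMeasure Q]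
    (hPQ : P ≪ Q) (hQP : Q ≪ P) (ε : ℝ) :
    hsDiv (Real.exp ε) P Q =
      ∫ y, max 0 (1 - Real.exp (ε - y))
        ∂(P.map fun x => Real.log ((P.rnDeriv Q x).toReal)) :=
  hsDiv_eq_expectation_pld_general P Q hPQ ε
end
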